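/- Let M' be a stable matching in the reduced HR instance G' and suppose the level-s copy h^s of hospital h is active (matched to at least one non-dummy resident). Then: (a) at least one position of h^{s−1} is matched to a level-(s−1) dummy resident; (b) for every j ≤ s−2, h^j is inactive and all its positions are matched to level-j dummy residents; (c) for every j ≥ s+2, h^j is inactive and all its positions are matched to level-(j−1) dummy residents. -/

import Mathlib

open Finset

attribute [local instance] Classical.propDecidable

namespace HRLQ

variable {R H : Type}

/-- Number of levels in the reduced HR instance (`T = 2` for `G'`, `T = |R|` for `G''`). -/
def ell (H : Type) [Fintype H] (T : ℕ) (qm : H → ℕ) : ℕ := T + ∑ h, qm h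

/-- Dummy residents of the reduced instance: a dummy `⟨h, s, i⟩` is the `i`-th level-`s`
dummy resident corresponding to hospital `h`; levels run over `0,…,ℓ-2`, there are
`q⁺(h)` dummies at levels `< T` and `q⁻(h)` dummies at levels `≥ T`. -/
def Dummy (H : Type) [Fintype H] (T : ℕ) (qp qm : H → ℕ) : Type :=
  {x : Σ h : H, Fin (ell H T qm) × Fin (qp h) //
    x.2.1.val ≤ ell H T qm - 2 ∧ (T ≤ x.2.1.val → x.2.2.val < qm x.1)}

noncomputable instance [Fintype H] (T : ℕ) (qp qm : H → ℕ) : Fintype (Dummy H T qp qm) := by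
  classical
  unfold Dummy
  infer_instance

variable [Fintype H]

def Dummy.h {T : ℕ} {qp qm : H → ℕ} (d : Dummy H T qp qm) : H := d.1.1
def Dummy.s {T : ℕ} {qp qm : H → ℕ} (d : Dummy H T qp qm) : ℕ := d.1.2.1.val
def Dummy.i {T : ℕ} {qp qm : H → ℕ} (d : Dummy H T qp qm) : ℕ := d.1.2.2.val

/-- Residents of the reduced instance: original residents plus dummies. -/
def Res (R H : Type) [Fintype H] (T : ℕ) (qp qm : H → ℕ) : Type := R ⊕ Dummy H T qp qm

/-- Hospitals of the reduced instance: level copies `h^s`, `s ∈ {0,…,ℓ-1}`. -/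
def Hos (H : Type) [Fintype H] (T : ℕ) (qm : H → ℕ) : Type := H × Fin (ell H T qm)

noncomputable instance [Fintype R] (T : ℕ) (qp qm : H → ℕ) : Fintype (Res R H T qp qm) := by
  unfold Res; infer_instance

instance (T : ℕ) (qm : H → ℕ) : Fintype (Hos H T qm) := by
  unfold Hos; infer_instance

/-- Capacity of the level copy `h^s`. -/
def cap (T : ℕ) (qp qm : H → ℕ) (hs : Hos H T qm) : ℕ :=
  if hs.2.val < T then qp hs.1 else qm hs.1

/-- Acceptability (edges) in the reduced instance. A level-`s` dummy of `h` is acceptable to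
`h^s` and `h^{s+1}`, except that the first `q⁺(h) - q⁻(h)` dummies at level `T-1` only list
`h^{T-1}`.  An original resident `r` is acceptable to every copy of each hospital on its list. -/
def edge (T : ℕ) (qp qm : H → ℕ) (E : R → H → Prop) :
    Res R H T qp qm → Hos H T qm → Prop
  | Sum.inl r, hs => E r hs.1
  | Sum.inr d, hs => d.h = hs.1 ∧
      (hs.2.val = d.s ∨
        (hs.2.val = d.s + 1 ∧ ¬(d.s = T - 1 ∧ d.i < qp hs.1 - qm hs.1)))

/-- Rank (smaller = better) that a dummy assigns to hospital copies. -/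
noncomputable def dkey {T : ℕ} {qp qm : H → ℕ} (d : Dummy H T qp qm) (a : Hos H T qm) : ℕ :=
  if a.1 = d.h ∧ a.2.val = d.s then 0
  else if a.1 = d.h ∧ a.2.val = d.s + 1 then 1 else 2

/-- Preferences of residents of the reduced instance over hospital copies:
an original resident prefers higher level copies, and within a level follows its original
ranking `rankR` (smaller rank = more preferred); a level-`s` dummy of `h` has list `⟨h^s, h^{s+1}⟩`. -/
def prefRes (T : ℕ) (qp qm : H → ℕ) (rankR : R → H → ℕ) :
    Res R H T qp qm → Hos H T qm → Hos H T qm → Prop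
  | Sum.inl r, a, b => b.2.val < a.2.val ∨ (a.2.val = b.2.val ∧ rankR r a.1 < rankR r b.1)
  | Sum.inr d, a, b => dkey d a < dkey d b

/-- Preference class of a resident in the list of `h^s`: level-`(s-1)` dummies of `h` first,
then original residents, then level-`s` dummies of `h`. -/
noncomputable def hclass {T : ℕ} {qp qm : H → ℕ} (hs : Hos H T qm) : Res R H T qp qm → ℕ
  | Sum.inl _ => 1
  | Sum.inr d =>
      if d.h = hs.1 ∧ 1 ≤ hs.2.val ∧ d.s = hs.2.val - 1 then 0
      else if d.h = hs.1 ∧ d.s = hs.2.val then 2 else 3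

/-- Rank within a preference class. -/
def hinner {T : ℕ} {qp qm : H → ℕ} (rankH : H → R → ℕ) (hs : Hos H T qm) :
    Res R H T qp qm → ℕ
  | Sum.inl r => rankH hs.1 r
  | Sum.inr d => d.i

/-- Preferences of hospital copies over residents of the reduced instance. -/
def prefHos (T : ℕ) (qp qm : H → ℕ) (rankH : H → R → ℕ) (hs : Hos H T qm)
    (x y : Res R H T qp qm) : Prop :=
  hclass hs x < hclass hs y ∨
    (hclass hs x = hclass hs y ∧ hinner rankH hs x < hinner rankH hs y)

variable [Fintype R]

/-- The set of residents matched to the hospital copy `hs`. -/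
noncomputable def mset {T : ℕ} {qp qm : H → ℕ}
    (M : Res R H T qp qm → Option (Hos H T qm)) (hs : Hos H T qm) :
    Finset (Res R H T qp qm) :=
  univ.filter (fun x => M x = some hs)

/-- `M` is a matching of the reduced (HR) instance: it respects acceptability and capacities. -/
def isMatchingRed (T : ℕ) (qp qm : H → ℕ) (E : R → H → Prop)
    (M : Res R H T qp qm → Option (Hos H T qm)) : Prop :=
  (∀ x hs, M x = some hs → edge T qp qm E x hs) ∧
    ∀ hs, (mset M hs).card ≤ cap T qp qm hs

/-- `(x, hs)` is a blocking pair for `M` in the reduced instance. -/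
def blocksRed (T : ℕ) (qp qm : H → ℕ) (E : R → H → Prop) (rankR : R → H → ℕ)
    (rankH : H → R → ℕ) (M : Res R H T qp qm → Option (Hos H T qm))
    (x : Res R H T qp qm) (hs : Hos H T qm) : Prop :=
  edge T qp qm E x hs ∧
    (∀ hs', M x = some hs' → prefRes T qp qm rankR x hs hs') ∧
    ((mset M hs).card < cap T qp qm hs ∨
      ∃ y ∈ mset M hs, prefHos T qp qm rankH hs x y)

/-- Stability in the reduced HR instance. -/
def stableRed (T : ℕ) (qp qm : H → ℕ) (E : R → H → Prop) (rankR : R → H → ℕ)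
    (rankH : H → R → ℕ) (M : Res R H T qp qm → Option (Hos H T qm)) : Prop :=
  isMatchingRed T qp qm E M ∧ ∀ x hs, ¬ blocksRed T qp qm E rankR rankH M x hs

/-- A hospital copy is active if it is matched to at least one non-dummy resident. -/
def active {T : ℕ} {qp qm : H → ℕ}
    (M : Res R H T qp qm → Option (Hos H T qm)) (hs : Hos H T qm) : Prop :=
  ∃ r : R, M (Sum.inl r) = some hs

/-- The matching of the original HRLQ instance obtained from a matching of the reduced
instance: `r` is matched to `h` iff `r` is matched to some level copy of `h`. -/
def mapToG {T : ℕ} {qp qm : H → ℕ}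
    (M : Res R H T qp qm → Option (Hos H T qm)) : R → Option H :=
  fun r => (M (Sum.inl r)).map Prod.fst

/-- Set of residents matched to `h` in a matching of the original instance. -/
noncomputable def msetO (N : R → Option H) (h : H) : Finset R :=
  univ.filter (fun r => N r = some h)

/-- Feasibility in the original HRLQ instance. -/
def feasibleO (E : R → H → Prop) (qp qm : H → ℕ) (N : R → Option H) : Prop :=
  (∀ r h, N r = some h → E r h) ∧
    ∀ h, qm h ≤ (msetO N h).card ∧ (msetO N h).card ≤ qp h

/-- Cardinality of a matching of the original instance. -/
noncomputable def sizeO (N : R → Option H) : ℕ :=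
  (univ.filter (fun r : R => N r ≠ none)).card

/-- `r ∈ R_i`: `r` is matched to a level-`i` hospital copy (unmatched residents are in `R_0`). -/
def inRlev {T : ℕ} {qp qm : H → ℕ}
    (M : Res R H T qp qm → Option (Hos H T qm)) (i : ℕ) (r : R) : Prop :=
  (∃ hs, M (Sum.inl r) = some hs ∧ hs.2.val = i) ∨ (M (Sum.inl r) = none ∧ i = 0)

/-- `h ∈ H_j`: the copy `h^j` is active (with the convention that a hospital matched to no
resident is placed in `H_{T-1}` if it has no lower quota and in `H_{ℓ-1}` otherwise). -/
def inHlev (T : ℕ) (qp qm : H → ℕ)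
    (M : Res R H T qp qm → Option (Hos H T qm)) (j : ℕ) (h : H) : Prop :=
  (∃ s : Fin (ell H T qm), s.val = j ∧ active M (h, s)) ∨
    ((∀ r, mapToG M r ≠ some h) ∧
      ((qm h = 0 ∧ j = T - 1) ∨ (0 < qm h ∧ j = ell H T qm - 1)))

/-- Residents matched to `h` in `Mo` but not in `N`. -/
noncomputable def Aset (Mo N : R → Option H) (h : H) : Finset R :=
  msetO Mo h \ msetO N h

/-- Residents matched to `h` in `N` but not in `Mo`. -/
noncomputable def Bset (Mo N : R → Option H) (h : H) : Finset R :=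
  msetO N h \ msetO Mo h

/-- `σ h` is a correspondence chosen by hospital `h` between `N(h) ∖ Mo(h)` and
`Mo(h) ∖ N(h)`: it is injective, maps into `Mo(h) ∖ N(h)`, and pairs as many residents as
possible (unpaired residents correspond to `⊥`). -/
def validCorr (Mo N : R → Option H) (σ : H → R → Option R) : Prop :=
  ∀ h,
    (∀ r' ∈ Bset Mo N h, ∀ r, σ h r' = some r → r ∈ Aset Mo N h) ∧
    (∀ r₁ ∈ Bset Mo N h, ∀ r₂ ∈ Bset Mo N h, ∀ r,
        σ h r₁ = some r → σ h r₂ = some r → r₁ = r₂) ∧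
    ((∀ r ∈ Aset Mo N h, ∃ r' ∈ Bset Mo N h, σ h r' = some r) ∨
      (∀ r' ∈ Bset Mo N h, σ h r' ≠ none))

/-- The vote of resident `r` comparing partners `x` (in `N`) and `y` (in `Mo`):
`1` if `r` prefers `x`, `-1` if `r` prefers `y`, `0` if they coincide. -/
noncomputable def rvote (rankR : R → H → ℕ) (r : R) (x y : Option H) : ℤ :=
  if x = y then 0
  else
    match x, y with
    | some a, some b => if rankR r a < rankR r b then 1 else -1
    | some _, none => 1
    | none, _ => -1

/-- The net vote of hospital `h` for `N` against `Mo`, given the correspondence `σ h`: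
each resident of `N(h) ∖ Mo(h)` is compared with its corresponding resident of
`Mo(h) ∖ N(h)` (or with `⊥`), and each unpaired resident of `Mo(h) ∖ N(h)` contributes one
vote for `Mo`. -/
noncomputable def hvote (rankH : H → R → ℕ) (Mo N : R → Option H)
    (σ : H → R → Option R) (h : H) : ℤ :=
  (∑ r' ∈ Bset Mo N h,
      (match σ h r' with
        | some r => if rankH h r' < rankH h r then (1 : ℤ) else -1
        | none => 1)) -
    ((Aset Mo N h).filter (fun r => ∀ r' ∈ Bset Mo N h, σ h r' ≠ some r)).card

/-- Total net vote for `N` against `Mo` (given correspondences `σ`). -/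
noncomputable def totalVote (rankR : R → H → ℕ) (rankH : H → R → ℕ)
    (N Mo : R → Option H) (σ : H → R → Option R) : ℤ :=
  (∑ r : R, rvote rankR r (N r) (Mo r)) + ∑ h : H, hvote rankH Mo N σ h

/-- `Mo` is popular among the feasible matchings of the HRLQ instance. -/
def popularAmongFeasible (E : R → H → Prop) (rankR : R → H → ℕ) (rankH : H → R → ℕ)
    (qp qm : H → ℕ) (Mo : R → Option H) : Prop :=
  ∀ N, feasibleO E qp qm N → ∀ σ, validCorr Mo N σ → totalVote rankR rankH N Mo σ ≤ 0

end HRLQ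


/-!
The dummies of `h` chain its level copies together. If `h^t` holds a resident other than a
level-`(t-1)` dummy, then some level-`(t-1)` dummy must sit at `h^{t-1}`: otherwise each of the
`cap h^t` level-`(t-1)` dummies that list `h^t` is either at `h^t` or, being unmatched and ranked
first by `h^t`, blocks with it, so `h^t` would be over capacity. Starting from the active copy
`h^s` and going down, this puts a level-`t` dummy at `h^t` for every `t < s`; a resident at `h^t`
with `t ≤ s - 2` would then block with `h^{t+1}`. An upward induction from `h^0` shows that such
copies hold only their own level dummies, and a dummy left out would block with its first
choice, so they hold all of them. Above `s`, the resident matched to `h^s` prefers every `h^t`,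
so `h^t` is full and holds neither residents nor level-`t` dummies.
-/

namespace HRLQ

variable {R H : Type} [Fintype H] {T : ℕ} {qp qm : H → ℕ}

section Dummies

def Dummy.home (d : Dummy H T qp qm) : Hos H T qm := (d.h, d.1.2.1)

theorem Dummy.home_eq_iff {d : Dummy H T qp qm} {hs : Hos H T qm} :
    d.home = hs ↔ d.h = hs.1 ∧ d.s = hs.2.val := by
  constructor
  · rintro rfl
    exact ⟨rfl, rfl⟩
  · rintro ⟨h1, h2⟩
    exact Prod.ext h1 (Fin.ext h2)

theorem Dummy.ext_of_home_eq {d d' : Dummy H T qp qm} (hhome : d.home = d'.home)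
    (hi : d.i = d'.i) : d = d' := by
  obtain ⟨⟨a, b, c⟩, _⟩ := d
  obtain ⟨⟨a', b', c'⟩, _⟩ := d'
  simp only [Dummy.home, Dummy.h] at hhome
  obtain ⟨rfl, rfl⟩ := hhome
  obtain rfl : c = c' := Fin.ext hi
  rfl

theorem Dummy.i_lt_cap_home (d : Dummy H T qp qm) : d.i < cap T qp qm d.home := by
  unfold cap
  split_ifs with hlt
  · exact d.1.2.2.isLt
  · exact d.2.2 (not_lt.1 hlt)

noncomputable def homeDummies (hs : Hos H T qm) : Finset (Dummy H T qp qm) :=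
  univ.filter fun d => d.home = hs

/-- The level-`(t-1)` dummies of `h` that list `hs = h^t`. -/
noncomputable def lowerDummies (hs : Hos H T qm) : Finset (Dummy H T qp qm) :=
  univ.filter fun d =>
    d.h = hs.1 ∧ d.s + 1 = hs.2.val ∧ ¬(d.s = T - 1 ∧ d.i < qp hs.1 - qm hs.1)

theorem card_filter_dummies (h : H) {u : ℕ} (hu : u + 2 ≤ ell H T qm) (hq : qm h ≤ qp h)
    (p : ℕ → Prop) [DecidablePred p] :
    #(univ.filter fun d : Dummy H T qp qm => d.h = h ∧ d.s = u ∧ p d.i) =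
      #((range (if u < T then qp h else qm h)).filter p) := by
  apply card_bij (fun d _ => d.i)
  · intro d hd
    simp only [mem_filter, mem_univ, true_and] at hd ⊢
    obtain ⟨rfl, rfl, hp⟩ := hd
    refine ⟨?_, hp⟩
    split_ifs with hlt
    · exact mem_range.2 d.1.2.2.isLt
    · exact mem_range.2 (d.2.2 (not_lt.1 hlt))
  · rintro d hd d' hd' hi
    simp only [mem_filter, mem_univ, true_and] at hd hd'
    exact Dummy.ext_of_home_eq
      (Dummy.home_eq_iff.2 ⟨hd.1.trans hd'.1.symm, hd.2.1.trans hd'.2.1.symm⟩) hi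
  · intro i hi
    simp only [mem_filter, mem_range] at hi
    have hiq : i < qp h := by split_ifs at hi <;> omega
    refine ⟨⟨⟨h, ⟨u, by omega⟩, ⟨i, hiq⟩⟩, by simp only; omega, fun hTu => ?_⟩, ?_, rfl⟩
    · simpa [not_lt.2 hTu] using hi.1
    · exact mem_filter.2 ⟨mem_univ _, rfl, rfl, hi.2⟩

theorem card_homeDummies {hs : Hos H T qm} (hlev : hs.2.val + 2 ≤ ell H T qm)
    (hq : qm hs.1 ≤ qp hs.1) : #(homeDummies (qp := qp) hs) = cap T qp qm hs := by
  have h := card_filter_dummies (qp := qp) hs.1 hlev hq (fun _ => True)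
  simp only [and_true, filter_true, card_range] at h
  simp only [homeDummies, Dummy.home_eq_iff, h, cap]

theorem card_lowerDummies (hT : 0 < T) {hs : Hos H T qm} (hlev : 1 ≤ hs.2.val)
    (hq : qm hs.1 ≤ qp hs.1) : #(lowerDummies (qp := qp) hs) = cap T qp qm hs := by
  have hu : hs.2.val - 1 + 2 ≤ ell H T qm := by have := hs.2.isLt; omega
  have h := card_filter_dummies (qp := qp) hs.1 hu hq
    (fun i => ¬(hs.2.val - 1 = T - 1 ∧ i < qp hs.1 - qm hs.1))
  have hset : lowerDummies (qp := qp) hs = univ.filter fun d : Dummy H T qp qm =>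
      d.h = hs.1 ∧ d.s = hs.2.val - 1 ∧ ¬(hs.2.val - 1 = T - 1 ∧ d.i < qp hs.1 - qm hs.1) := by
    ext d
    simp only [lowerDummies, mem_filter, mem_univ, true_and]
    constructor
    · rintro ⟨h1, h2, h3⟩
      exact ⟨h1, by omega, by rwa [← show d.s = hs.2.val - 1 by omega]⟩
    · rintro ⟨h1, h2, h3⟩
      exact ⟨h1, by omega, by rwa [h2]⟩
  rw [hset, h, cap]
  by_cases hTop : hs.2.val = T
  · have hfilter : (range (qp hs.1)).filter (fun i => ¬(hs.2.val - 1 = T - 1 ∧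
        i < qp hs.1 - qm hs.1)) = Ico (qp hs.1 - qm hs.1) (qp hs.1) := by
      ext i
      simp only [mem_filter, mem_range, mem_Ico]
      omega
    rw [if_pos (by omega), hfilter, Nat.card_Ico, if_neg (by omega)]
    omega
  · have hfilter : ∀ n, (range n).filter (fun i => ¬(hs.2.val - 1 = T - 1 ∧
        i < qp hs.1 - qm hs.1)) = range n := fun n => filter_true_of_mem fun _ _ => by omega
    rw [hfilter, card_range]
    split_ifs <;> first | rfl | omega

end Dummies

section Preferences

theorem hclass_inl (hs : Hos H T qm) (r : R) : hclass (qp := qp) hs (Sum.inl r) = 1 := rfl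

theorem hclass_inr_of_home_eq {hs : Hos H T qm} {d : Dummy H T qp qm} (hd : d.home = hs) :
    hclass (R := R) hs (Sum.inr d) = 2 := by
  obtain ⟨h1, h2⟩ := Dummy.home_eq_iff.1 hd
  simp only [hclass]
  rw [if_neg (by omega), if_pos ⟨h1, h2⟩]

theorem hclass_inr_of_succ_level {hs : Hos H T qm} {d : Dummy H T qp qm} (h1 : d.h = hs.1)
    (h2 : d.s + 1 = hs.2.val) : hclass (R := R) hs (Sum.inr d) = 0 := by
  simp only [hclass]
  rw [if_pos ⟨h1, by omega, by omega⟩]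

theorem prefHos_of_hclass_lt {rankH : H → R → ℕ} {hs : Hos H T qm} {x y : Res R H T qp qm}
    (hlt : hclass hs x < hclass hs y) : prefHos T qp qm rankH hs x y :=
  Or.inl hlt

theorem i_le_of_not_prefHos {rankH : H → R → ℕ} {hs : Hos H T qm} {d d' : Dummy H T qp qm}
    (hd : d.home = hs) (hd' : d'.home = hs)
    (hnp : ¬ prefHos T qp qm rankH hs (Sum.inr d) (Sum.inr d')) : d'.i ≤ d.i := by
  unfold prefHos at hnp
  rw [hclass_inr_of_home_eq hd, hclass_inr_of_home_eq hd'] at hnp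
  have hi : ¬ d.i < d'.i := fun hlt => hnp (Or.inr ⟨rfl, hlt⟩)
  omega

theorem prefRes_home {rankR : R → H → ℕ} {d : Dummy H T qp qm} {hs : Hos H T qm}
    (hne : hs ≠ d.home) : prefRes T qp qm rankR (Sum.inr d) d.home hs := by
  have hhome : ¬(hs.1 = d.h ∧ hs.2.val = d.s) := fun h =>
    hne (Dummy.home_eq_iff.2 ⟨h.1.symm, h.2.symm⟩).symm
  have hzero : dkey d d.home = 0 := if_pos ⟨rfl, rfl⟩
  have hpos : dkey d hs ≠ 0 := by
    unfold dkey
    rw [if_neg hhome]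
    split_ifs <;> omega
  show dkey d d.home < dkey d hs
  omega

end Preferences

section Stability

variable {E : R → H → Prop} {rankR : R → H → ℕ} {M : Res R H T qp qm → Option (Hos H T qm)}

def Envies (E : R → H → Prop) (rankR : R → H → ℕ) (M : Res R H T qp qm → Option (Hos H T qm))
    (x : Res R H T qp qm) (hs : Hos H T qm) : Prop :=
  edge T qp qm E x hs ∧ ∀ hs', M x = some hs' → prefRes T qp qm rankR x hs hs'

theorem envies_home {d : Dummy H T qp qm} (hM : M (Sum.inr d) ≠ some d.home) :
    Envies E rankR M (Sum.inr d) d.home :=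
  ⟨⟨rfl, Or.inl rfl⟩, fun _ hM' => prefRes_home fun hEq => hM (hEq ▸ hM')⟩

variable [Fintype R] {rankH : H → R → ℕ}

theorem mem_mset {x : Res R H T qp qm} {hs : Hos H T qm} : x ∈ mset M hs ↔ M x = some hs := by
  simp [mset]

theorem cap_le_card_of_envies (hst : stableRed T qp qm E rankR rankH M)
    {x : Res R H T qp qm} {hs : Hos H T qm} (henv : Envies E rankR M x hs) :
    cap T qp qm hs ≤ #(mset M hs) :=
  not_lt.1 fun hlt => hst.2 x hs ⟨henv.1, henv.2, Or.inl hlt⟩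

theorem not_prefHos_of_envies (hst : stableRed T qp qm E rankR rankH M)
    {x y : Res R H T qp qm} {hs : Hos H T qm} (henv : Envies E rankR M x hs)
    (hy : M y = some hs) : ¬ prefHos T qp qm rankH hs x y :=
  fun hpref => hst.2 x hs ⟨henv.1, henv.2, Or.inr ⟨y, mem_mset.2 hy, hpref⟩⟩

theorem envies_of_level_lt (hmat : isMatchingRed T qp qm E M) {r : R} {hs hs' : Hos H T qm}
    (hr : M (Sum.inl r) = some hs) (h1 : hs'.1 = hs.1) (hlt : hs.2.val < hs'.2.val) :
    Envies E rankR M (Sum.inl r) hs' := by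
  refine ⟨?_, fun hs'' hr' => ?_⟩
  · have hE : E r hs.1 := hmat.1 _ _ hr
    exact (h1 ▸ hE : E r hs'.1)
  · obtain rfl : hs = hs'' := Option.some.inj (hr.symm.trans hr')
    exact Or.inl hlt

theorem home_or_up_of_dummy_matched (hmat : isMatchingRed T qp qm E M) {d : Dummy H T qp qm}
    {hs : Hos H T qm} (hM : M (Sum.inr d) = some hs) :
    hs = d.home ∨ (hs.1 = d.h ∧ hs.2.val = d.s + 1) := by
  obtain ⟨h1, h2 | ⟨h2, -⟩⟩ := hmat.1 _ _ hM
  · exact Or.inl (Dummy.home_eq_iff.2 ⟨h1, h2.symm⟩).symm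
  · exact Or.inr ⟨h1.symm, h2⟩

end Stability

section Chain

variable [Fintype R] {E : R → H → Prop} {rankR : R → H → ℕ} {rankH : H → R → ℕ}
  {M : Res R H T qp qm → Option (Hos H T qm)}

def Dummy.toRes : Dummy H T qp qm ↪ Res R H T qp qm := Function.Embedding.inr

def HeldByHomeDummies (M : Res R H T qp qm → Option (Hos H T qm)) (hs : Hos H T qm) : Prop :=
  ∀ x, M x = some hs → ∃ d : Dummy H T qp qm, x = Sum.inr d ∧ d.home = hs

variable (hst : stableRed T qp qm E rankR rankH M)
include hst

theorem exists_lower_dummy_at_home (hT : 0 < T) {hs : Hos H T qm} (hlev : 1 ≤ hs.2.val)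
    (hq : qm hs.1 ≤ qp hs.1) {x : Res R H T qp qm} (hx : M x = some hs)
    (hcl : hclass hs x ≠ 0) :
    ∃ d : Dummy H T qp qm, d.h = hs.1 ∧ d.s + 1 = hs.2.val ∧ M (Sum.inr d) = some d.home := by
  by_contra hnone
  push Not at hnone
  have hlower : ∀ d ∈ lowerDummies hs, M (Sum.inr d) = some hs := by
    intro d hd
    obtain ⟨hdh, hds, hacc⟩ := (mem_filter.1 hd).2
    cases hM : M (Sum.inr d) with
    | none =>
      have henv : Envies E rankR M (Sum.inr d) hs :=
        ⟨⟨hdh, Or.inr ⟨hds.symm, hacc⟩⟩, fun _ h => by simp [hM] at h⟩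
      exact absurd (prefHos_of_hclass_lt (by rw [hclass_inr_of_succ_level hdh hds]; omega))
        (not_prefHos_of_envies hst henv hx)
    | some hs' =>
      rcases home_or_up_of_dummy_matched hst.1 hM with rfl | ⟨h1, h2⟩
      · exact absurd hM (hnone d hdh hds)
      · exact congrArg some (Prod.ext (h1.trans hdh) (Fin.ext (h2.trans hds)))
  have hsub : (lowerDummies hs).map Dummy.toRes ⊆ mset M hs := fun y hy => by
    obtain ⟨d, hd, rfl⟩ := mem_map.1 hy
    exact mem_mset.2 (hlower d hd)
  have hx_not : x ∉ (lowerDummies hs).map (Dummy.toRes (R := R)) := fun hmem => by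
    obtain ⟨d, hd, rfl⟩ := mem_map.1 hmem
    obtain ⟨hdh, hds, -⟩ := (mem_filter.1 hd).2
    exact hcl (hclass_inr_of_succ_level hdh hds)
  have hcard := card_lt_card ((ssubset_iff_of_subset hsub).2 ⟨x, mem_mset.2 hx, hx_not⟩)
  rw [card_map, card_lowerDummies hT hlev hq] at hcard
  exact absurd (hst.1.2 hs) (not_le.2 hcard)

/-- A home dummy `d` left out of `hs` would block with it: `hs` ranks `d` above every occupant
except the fewer than `d.i < cap hs` home dummies of smaller index. -/
theorem matched_home_of_heldByHomeDummies {hs : Hos H T qm} (hheld : HeldByHomeDummies M hs)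
    {d : Dummy H T qp qm} (hd : d.home = hs) : M (Sum.inr d) = some hs := by
  subst hd
  by_contra hM
  have henv : Envies E rankR M (Sum.inr d) d.home := envies_home hM
  have hsub : mset M d.home ⊆
      ((homeDummies d.home).filter (·.i < d.i)).map Dummy.toRes := by
    intro y hy
    obtain ⟨d', rfl, hd'⟩ := hheld y (mem_mset.1 hy)
    have hle := i_le_of_not_prefHos (d := d) rfl hd'
      (not_prefHos_of_envies hst henv (mem_mset.1 hy))
    have hne : d'.i ≠ d.i := fun hi => by
      have hd'M := mem_mset.1 hy
      rw [Dummy.ext_of_home_eq hd' hi] at hd'M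
      exact hM hd'M
    exact mem_map_of_mem _ (mem_filter.2 ⟨mem_filter.2 ⟨mem_univ _, hd'⟩, by omega⟩)
  have hsmall : #((homeDummies (qp := qp) d.home).filter (·.i < d.i)) ≤ d.i := by
    calc _ ≤ #(range d.i) := by
          refine card_le_card_of_injOn Dummy.i (fun d' hd' => ?_) fun a ha b hb hab => ?_
          · exact mem_range.2 (mem_filter.1 hd').2
          · exact Dummy.ext_of_home_eq (((mem_filter.1 (mem_filter.1 ha).1).2).trans
              ((mem_filter.1 (mem_filter.1 hb).1).2).symm) hab
      _ = d.i := card_range _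
  have hcard := card_le_card hsub
  rw [card_map] at hcard
  have := cap_le_card_of_envies hst henv
  have := d.i_lt_cap_home
  omega

theorem card_mset_of_heldByHomeDummies {hs : Hos H T qm} (hheld : HeldByHomeDummies M hs)
    (hlev : hs.2.val + 2 ≤ ell H T qm) (hq : qm hs.1 ≤ qp hs.1) :
    #(mset M hs) = cap T qp qm hs := by
  have hset : mset M hs = (homeDummies hs).map Dummy.toRes := by
    ext y
    constructor
    · intro hy
      obtain ⟨d, rfl, hd⟩ := hheld y (mem_mset.1 hy)
      exact mem_map_of_mem _ (mem_filter.2 ⟨mem_univ _, hd⟩)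
    · intro hy
      obtain ⟨d, hd, rfl⟩ := mem_map.1 hy
      exact mem_mset.2 (matched_home_of_heldByHomeDummies hst hheld (mem_filter.1 hd).2)
  rw [hset, card_map, card_homeDummies hlev hq]

variable {hs₀ : Hos H T qm} {r₀ : R} (hr : M (Sum.inl r₀) = some hs₀)
include hr

theorem not_home_dummy_of_lt_level {d : Dummy H T qp qm} (hdh : d.h = hs₀.1)
    (hlt : hs₀.2.val < d.s) : M (Sum.inr d) ≠ some d.home := fun hM =>
  not_prefHos_of_envies hst (envies_of_level_lt hst.1 hr hdh hlt) hM
    (prefHos_of_hclass_lt (by rw [hclass_inl, hclass_inr_of_home_eq rfl]; omega))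


variable (hT : 0 < T) (hq : qm hs₀.1 ≤ qp hs₀.1)
include hT hq

theorem exists_home_dummy_of_lt {t : ℕ} (ht : t < hs₀.2.val) :
    ∃ d : Dummy H T qp qm, d.h = hs₀.1 ∧ d.s = t ∧ M (Sum.inr d) = some d.home := by
  obtain ⟨n, hn⟩ := Nat.exists_eq_add_of_lt ht
  induction n generalizing t with
  | zero =>
    obtain ⟨d, hdh, hds, hM⟩ :=
      exists_lower_dummy_at_home hst hT (by omega) hq hr (by rw [hclass_inl]; omega)
    exact ⟨d, hdh, by omega, hM⟩
  | succ n ih =>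
    obtain ⟨d, hdh, hds, hM⟩ := ih (t := t + 1) (by omega) (by omega)
    obtain ⟨d', hd'h, hd's, hM'⟩ := exists_lower_dummy_at_home hst hT (hs := d.home)
      (show 1 ≤ d.s by omega) (show qm d.h ≤ qp d.h by rwa [hdh]) hM
      (by rw [hclass_inr_of_home_eq rfl]; omega)
    exact ⟨d', hd'h.trans hdh, by change d'.s + 1 = d.s at hd's; omega, hM'⟩

theorem not_resident_of_level_add_two_le {hs : Hos H T qm} (h1 : hs.1 = hs₀.1)
    (hlev : hs.2.val + 2 ≤ hs₀.2.val) (r : R) : M (Sum.inl r) ≠ some hs := by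
  intro hM
  obtain ⟨d, hdh, hds, hdM⟩ := exists_home_dummy_of_lt hst hr hT hq (t := hs.2.val + 1) (by omega)
  have henv : Envies E rankR M (Sum.inl r) d.home :=
    envies_of_level_lt hst.1 hM (hdh.trans h1.symm) (show hs.2.val < d.s by omega)
  exact not_prefHos_of_envies hst henv hdM
    (prefHos_of_hclass_lt (by rw [hclass_inl, hclass_inr_of_home_eq rfl]; omega))

theorem heldByHomeDummies_of_level_add_two_le {hs : Hos H T qm} (h1 : hs.1 = hs₀.1)
    (hlev : hs.2.val + 2 ≤ hs₀.2.val) : HeldByHomeDummies M hs := by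
  induction hht : hs.2.val using Nat.strong_induction_on generalizing hs with
  | _ t ih =>
    intro x hx
    rcases x with r | d
    · exact absurd hx (not_resident_of_level_add_two_le hst hr hT hq h1 hlev r)
    rcases home_or_up_of_dummy_matched hst.1 hx with hhome | ⟨hdh, hds⟩
    · exact ⟨d, rfl, hhome.symm⟩
    have hheld : HeldByHomeDummies M d.home :=
      ih d.s (by omega) (hdh.symm.trans h1) (show d.s + 2 ≤ hs₀.2.val by omega) rfl
    have hM := matched_home_of_heldByHomeDummies hst hheld rfl
    have hlevels :=
      congrArg (fun hs : Hos H T qm => hs.2.val) (Option.some.inj (hx.symm.trans hM))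
    change hs.2.val = d.s at hlevels
    omega

theorem not_resident_of_add_two_le_level {hs : Hos H T qm} (h1 : hs.1 = hs₀.1)
    (hlev : hs₀.2.val + 2 ≤ hs.2.val) (r : R) : M (Sum.inl r) ≠ some hs := fun hM => by
  obtain ⟨d, hdh, hds, hdM⟩ :=
    exists_lower_dummy_at_home hst hT (by omega) (h1 ▸ hq) hM (by rw [hclass_inl]; omega)
  exact not_home_dummy_of_lt_level hst hr (hdh.trans h1) (by omega) hdM

end Chain

end HRLQ

open HRLQ Finset

/-- Let `M` be a stable matching of the reduced HR instance `G'` and suppose the level-`s`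
copy `h^s` of hospital `h` is active.  Then: (a) if `s ≥ 1`, at least one position of
`h^{s-1}` is matched to a level-`(s-1)` dummy resident of `h`; (b) for `j ≤ s - 2`, the copy
`h^j` is inactive and all its positions are matched to level-`j` dummy residents of `h`;
(c) for `j ≥ s + 2`, the copy `h^j` is inactive and all its positions are matched to
level-`(j-1)` dummy residents of `h`. -/
theorem statement6 {R H : Type} [Fintype R] [Fintype H]
    (E : R → H → Prop) (rankR : R → H → ℕ) (rankH : H → R → ℕ) (qp qm : H → ℕ)
    (hq : ∀ h, qm h ≤ qp h)
    (M : Res R H 2 qp qm → Option (Hos H 2 qm))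
    (hst : stableRed 2 qp qm E rankR rankH M)
    (h : H) (s : Fin (ell H 2 qm)) (hact : active M (h, s)) :
    -- (a)
    (1 ≤ s.val → ∃ s' : Fin (ell H 2 qm), s'.val = s.val - 1 ∧
      ∃ d : Dummy H 2 qp qm, d.h = h ∧ d.s = s.val - 1 ∧ M (Sum.inr d) = some (h, s')) ∧
    -- (b)
    (∀ j : Fin (ell H 2 qm), j.val + 2 ≤ s.val →
      ¬ active M (h, j) ∧ (mset M (h, j)).card = cap 2 qp qm (h, j) ∧
        ∀ x ∈ mset M (h, j), ∃ d : Dummy H 2 qp qm,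
          x = Sum.inr d ∧ d.h = h ∧ d.s = j.val) ∧
    -- (c)
    (∀ j : Fin (ell H 2 qm), s.val + 2 ≤ j.val →
      ¬ active M (h, j) ∧ (mset M (h, j)).card = cap 2 qp qm (h, j) ∧
        ∀ x ∈ mset M (h, j), ∃ d : Dummy H 2 qp qm,
          x = Sum.inr d ∧ d.h = h ∧ d.s = j.val - 1) := by
  obtain ⟨r₀, hr⟩ := hact
  refine ⟨fun hs1 => ?_, fun j hj => ?_, fun j hj => ?_⟩
  · obtain ⟨d, rfl, hds, hM⟩ :=
      exists_lower_dummy_at_home hst two_pos (hs := (h, s)) hs1 (hq _) hr one_ne_zero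
    change d.s + 1 = s.val at hds
    exact ⟨d.1.2.1, show d.s = _ by omega, d, rfl, by omega, hM⟩
  · have hheld := heldByHomeDummies_of_level_add_two_le hst hr two_pos (hq h) (hs := (h, j)) rfl hj
    refine ⟨fun ⟨r, hr'⟩ => ?_, card_mset_of_heldByHomeDummies hst hheld
      (show j.val + 2 ≤ ell H 2 qm by have := s.isLt; omega) (hq h), fun x hx => ?_⟩
    · obtain ⟨d, hd, -⟩ := hheld _ hr'
      cases hd
    · obtain ⟨d, rfl, hd⟩ := hheld x (mem_mset.1 hx)
      exact ⟨d, rfl, Dummy.home_eq_iff.1 hd⟩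
  · have hres := not_resident_of_add_two_le_level hst hr two_pos (hq h) (hs := (h, j)) rfl hj
    refine ⟨fun ⟨r, hr'⟩ => hres r hr', le_antisymm (hst.1.2 _) (cap_le_card_of_envies hst
      (envies_of_level_lt hst.1 hr rfl (show s.val < j.val by omega))), fun x hx => ?_⟩
    rcases x with r | d
    · exact absurd (mem_mset.1 hx) (hres r)
    rcases home_or_up_of_dummy_matched hst.1 (mem_mset.1 hx) with hhome | ⟨hdh, hds⟩
    · obtain ⟨hdh, hds⟩ := Dummy.home_eq_iff.1 hhome.symm
      change d.s = j.val at hds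
      exact absurd (hhome ▸ mem_mset.1 hx)
        (not_home_dummy_of_lt_level hst hr hdh (show s.val < d.s by omega))
    · change h = d.h at hdh
      change j.val = d.s + 1 at hds
      exact ⟨d, rfl, hdh.symm, by omega⟩
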